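/- arXiv:1304.1446 — 3 statements merged into one kernel-verified Lean document; each statement's English description precedes it below -/
import Mathlib

section
/- Let K ⊂ ℂ be compact, R : K → ℝ continuous, and suppose μ = μ_{K,R} is the weighted equilibrium measure with support S_R and Robin constant ρ, so that R(t) = ∫ log|t−ξ| dμ(ξ) + ρ for t ∈ S_R. Then for every ε > 0 there is a weak* neighbourhood G of μ in the probability measures on K such that whenever (z_1,...,z_n) ∈ K^n has normalized counting measure in G, the weighted polynomial satisfies sup_{t∈S_R} e^{-nR(t)} ∏_{j=1}^n |t - z_j| ≤ e^{-n(ρ - ε)}. -/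
open MeasureTheory Complex Set Filter
open scoped Topology ENNReal NNReal Real

noncomputable section

def logPlus (t : ℝ) : ℝ := max (Real.log t) 0

def IsSubharmonicFn (u : ℂ → ℝ) : Prop :=
  UpperSemicontinuous u ∧ ∀ (z : ℂ) (r : ℝ), 0 < r →
    u z ≤ (2 * Real.pi)⁻¹ * ∫ θ in (0:ℝ)..(2 * Real.pi), u (z + r * Complex.exp (θ * Complex.I))

def GreenAdmissible (Y : Set ℂ) (R : ℂ → ℝ) (u : ℂ → ℝ) : Prop :=
  IsSubharmonicFn u ∧ (∀ w ∈ Y, u w ≤ R w) ∧ ∃ C : ℝ, ∀ w, u w ≤ logPlus ‖w‖ + C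

def greenFn (Y : Set ℂ) (R : ℂ → ℝ) (z : ℂ) : ℝ :=
  sSup {x | ∃ u, GreenAdmissible Y R u ∧ u z = x}

def RegularSet (K : Set ℂ) : Prop := Continuous (greenFn K 0)

def energyE (R : ℂ → ℝ) (ν : Measure ℂ) : ℝ :=
  -∫ z, ∫ t, Real.log ‖z - t‖ ∂ν ∂ν + 2 * ∫ z, R z ∂ν

def IsEquilibrium (K : Set ℂ) (R : ℂ → ℝ) (μ : Measure ℂ) : Prop :=
  IsProbabilityMeasure μ ∧ μ Kᶜ = 0 ∧
  ∀ ν : Measure ℂ, IsProbabilityMeasure ν → ν Kᶜ = 0 → energyE R μ ≤ energyE R ν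

def msupport (μ : Measure ℂ) : Set ℂ := {z | ∀ U ∈ 𝓝 z, μ U ≠ 0}

def wPoly (R : ℂ → ℝ) (n : ℕ) (p : Polynomial ℂ) (z : ℂ) : ℝ :=
  Real.exp (-(n : ℝ) * R z) * ‖Polynomial.eval z p‖

def WeightedBM (K : Set ℂ) (R : ℂ → ℝ) (τ : Measure ℂ) : Prop :=
  ∀ ε > 0, ∃ C > 0, ∀ (n : ℕ) (p : Polynomial ℂ), p.natDegree ≤ n →
    ∀ z ∈ K, wPoly R n p z ≤ C * (1 + ε) ^ n * ∫ w in K, wPoly R n p w ∂τ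

def Avand (β : ℝ) (Q : ℂ → ℝ) (n : ℕ) (z : Fin n → ℂ) : ℝ :=
  (∏ p ∈ Finset.univ.filter (fun p : Fin n × Fin n => p.1 < p.2), ‖z p.1 - z p.2‖) ^ β *
    Real.exp (-2 * n * ∑ j, Q (z j))

def Zc (K : Set ℂ) (τ : Measure ℂ) (β : ℝ) (Q : ℂ → ℝ) (n : ℕ) : ℝ :=
  ∫ z in Set.univ.pi (fun _ : Fin n => K), Avand β Q n z ∂(Measure.pi fun _ => τ)

def ProbE (K : Set ℂ) (τ : Measure ℂ) (β : ℝ) (Q : ℂ → ℝ) (n : ℕ) (S : Set (Fin n → ℂ)) : ℝ :=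
  (∫ z in S ∩ Set.univ.pi (fun _ : Fin n => K), Avand β Q n z ∂(Measure.pi fun _ => τ)) / Zc K τ β Q n

def countPM {n : ℕ} (hn : n ≠ 0) (z : Fin n → ℂ) : ProbabilityMeasure ℂ :=
  ⟨(n : ℝ≥0∞)⁻¹ • ∑ j, Measure.dirac (z j), by
    constructor
    simp [Measure.smul_apply, Measure.coe_finset_sum, Finset.sum_apply, measure_univ, smul_eq_mul]
    exact ENNReal.inv_mul_cancel (by exact_mod_cast hn) (by simp)⟩

def Ebeta (β : ℝ) (Q : ℂ → ℝ) (ν : Measure ℂ) : ℝ :=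
  -(β/2) * ∫ x, ∫ y, Real.log ‖x - y‖ ∂ν ∂ν + 2 * ∫ x, Q x ∂ν

def IsCompactNbhdIn (K S N : Set ℂ) : Prop :=
  IsCompact N ∧ N ⊆ K ∧ ∃ U : Set ℂ, IsOpen U ∧ S ⊆ U ∧ U ∩ K ⊆ N


/-! For `t₀` in the support, `∫ log ‖t₀ - ξ‖ dμ = R t₀ - ρ`. The bounded continuous kernels
`log (δ + ‖t₀ - ξ‖)` decrease to `log ‖t₀ - ξ‖` as `δ ↓ 0`, so for small `δ` their `μ`-integral is
below `R t₀ - ρ + ε / 2`, which is a weak* open condition on the measure. For `‖t - t₀‖ < δ` the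
kernel majorizes `log ‖t - ·‖`, so an empirical measure of `z₁, …, zₙ` satisfying the condition
gives `∑ log ‖t - zⱼ‖ < n (R t₀ - ρ + ε / 2) ≤ n (R t - ρ + ε)` once `t` is also close enough to
`t₀` for the continuity of `R`. Compactness of the support makes the neighbourhood uniform in `t`. -/

open scoped BoundedContinuousFunction

section LogKernel

variable {α : Type*} [MeasurableSpace α] {μ : Measure α} [IsProbabilityMeasure μ]

lemma lintegral_ofReal_const_sub {f : α → ℝ} (hf : Integrable f μ) {B : ℝ}
    (hfB : ∀ᵐ x ∂μ, f x ≤ B) :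
    ∫⁻ x, ENNReal.ofReal (B - f x) ∂μ = ENNReal.ofReal (B - ∫ x, f x ∂μ) := by
  have hBf : Integrable (fun x => B - f x) μ := (integrable_const B).sub hf
  rw [← ofReal_integral_eq_lintegral_ofReal hBf
    (by filter_upwards [hfB] with x hx using sub_nonneg.2 hx),
    integral_sub (integrable_const B) hf, integral_const, probReal_univ, one_smul]

lemma ofReal_const_sub_integral_le_lintegral {f : α → ℝ} (hf : AEStronglyMeasurable f μ) {B : ℝ}
    (hfB : ∀ᵐ x ∂μ, f x ≤ B) :
    ENNReal.ofReal (B - ∫ x, f x ∂μ) ≤ ∫⁻ x, ENNReal.ofReal (B - f x) ∂μ := by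
  by_cases hfi : Integrable f μ
  · exact (lintegral_ofReal_const_sub hfi hfB).ge
  · -- then `∫ f = 0` is junk, and the right side is `∞`
    suffices ∫⁻ x, ENNReal.ofReal (B - f x) ∂μ = ∞ by simp [this]
    by_contra hne
    have hBf : Integrable (fun x => B - f x) μ :=
      (lintegral_ofReal_ne_top_iff_integrable (aestronglyMeasurable_const.sub hf)
        (by filter_upwards [hfB] with x hx using sub_nonneg.2 hx)).1 hne
    have : Integrable (fun x => B - (B - f x)) μ := (integrable_const B).sub hBf
    exact hfi (by simpa using this)

/-- Monotone convergence for the nonnegative functions `B - log (δ + min d M)`, which increase to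
`B - log d` as `δ ↓ 0`; this works even when `log d` is not integrable. -/
theorem exists_integral_log_add_min_lt {d : α → ℝ} (hd : Measurable d) (hd0 : ∀ x, 0 ≤ d x)
    {M : ℝ} (hM : 0 ≤ M) (hdM : ∀ᵐ x ∂μ, d x ≤ M) {a : ℝ}
    (ha : ∫ x, Real.log (d x) ∂μ < a) :
    ∃ δ > 0, ∫ x, Real.log (δ + min (d x) M) ∂μ < a := by
  set δ : ℕ → ℝ := fun n => 1 / (n + 1)
  have hδ0 : ∀ n, 0 < δ n := fun n => Nat.one_div_pos_of_nat
  have hδ1 : ∀ n, δ n ≤ 1 := fun n => by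
    rw [div_le_one (by positivity)]; simp
  set f : ℕ → α → ℝ := fun n x => Real.log (δ n + min (d x) M)
  set B := Real.log (1 + M)
  have hmin0 : ∀ x, 0 ≤ min (d x) M := fun x => le_min (hd0 x) hM
  have hfB : ∀ n x, f n x ≤ B := fun n x =>
    Real.log_le_log (by linarith [hδ0 n, hmin0 x]) (by linarith [hδ1 n, min_le_right (d x) M])
  have hf_meas : ∀ n, Measurable (f n) := fun n =>
    Real.measurable_log.comp (measurable_const.add (hd.min measurable_const))
  have hf_int : ∀ n, Integrable (f n) μ := fun n => by
    refine Integrable.of_bound (hf_meas n).aestronglyMeasurable (max (-Real.log (δ n)) B)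
      (Eventually.of_forall fun x => ?_)
    have hlow : Real.log (δ n) ≤ f n x := Real.log_le_log (hδ0 n) (by linarith [hmin0 x])
    rw [Real.norm_eq_abs, abs_le]
    constructor
    · linarith [le_max_left (-Real.log (δ n)) B]
    · linarith [hfB n x, le_max_right (-Real.log (δ n)) B]
  have hf_anti : Antitone f := fun m n hmn x =>
    Real.log_le_log (by linarith [hδ0 n, hmin0 x])
      (by linarith [Nat.one_div_le_one_div (α := ℝ) hmn])
  -- at a zero of `d` the kernels are `log δ ≤ 0 = log 0`; elsewhere they converge to `log d`
  have hlog : ∀ᵐ x ∂μ, Real.log (d x) ≤ B ∧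
      ENNReal.ofReal (B - Real.log (d x)) ≤ ⨆ n, ENNReal.ofReal (B - f n x) := by
    filter_upwards [hdM] with x hx
    rcases (hd0 x).eq_or_lt with h0 | hpos
    · have hf0 : f 0 x = 0 := by simp [f, δ, ← h0, min_eq_left hM]
      rw [← h0, Real.log_zero]
      exact ⟨hf0 ▸ hfB 0 x, le_iSup_of_le 0 (by rw [hf0])⟩
    · refine ⟨(Real.log_le_log hpos (by rw [min_eq_left hx]; linarith [hδ0 0])).trans (hfB 0 x), ?_⟩
      have hlim : Tendsto (fun n => f n x) atTop (𝓝 (Real.log (d x))) := by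
        have := ((Real.continuousAt_log hpos.ne').tendsto).comp
          (by simpa using tendsto_one_div_add_atTop_nhds_zero_nat.add_const (d x))
        simpa [f, δ, min_eq_left hx, Function.comp_def] using this
      exact le_of_tendsto' ((ENNReal.continuous_ofReal.tendsto _).comp
        (tendsto_const_nhds.sub hlim)) fun n => le_iSup (fun n => ENNReal.ofReal (B - f n x)) n
  by_contra! hge
  have hint_ge : ∀ n, a ≤ ∫ x, f n x ∂μ := fun n => hge (δ n) (hδ0 n)
  have hBa : 0 ≤ B - a := by
    have := integral_mono (hf_int 0) (integrable_const B) (hfB 0)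
    simp only [integral_const, probReal_univ, one_smul] at this
    linarith [hint_ge 0]
  have key : ENNReal.ofReal (B - ∫ x, Real.log (d x) ∂μ) ≤ ENNReal.ofReal (B - a) :=
    calc ENNReal.ofReal (B - ∫ x, Real.log (d x) ∂μ)
        ≤ ∫⁻ x, ENNReal.ofReal (B - Real.log (d x)) ∂μ :=
          ofReal_const_sub_integral_le_lintegral (Real.measurable_log.comp hd).aestronglyMeasurable
            (hlog.mono fun x hx => hx.1)
      _ ≤ ∫⁻ x, ⨆ n, ENNReal.ofReal (B - f n x) ∂μ := lintegral_mono_ae (hlog.mono fun x hx => hx.2)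
      _ = ⨆ n, ∫⁻ x, ENNReal.ofReal (B - f n x) ∂μ :=
          lintegral_iSup (fun n => (measurable_const.sub (hf_meas n)).ennreal_ofReal)
            fun m n hmn x => ENNReal.ofReal_le_ofReal (by linarith [hf_anti hmn x])
      _ ≤ ENNReal.ofReal (B - a) := iSup_le fun n => by
          rw [lintegral_ofReal_const_sub (hf_int n) (Eventually.of_forall (hfB n))]
          exact ENNReal.ofReal_le_ofReal (by linarith [hint_ge n])
  linarith [(ENNReal.ofReal_le_ofReal_iff hBa).1 key]

end LogKernel

lemma msupport_eq_support (μ : Measure ℂ) : msupport μ = μ.support := by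
  ext x
  simp [msupport, Measure.mem_support_iff_forall, pos_iff_ne_zero]

lemma integral_countPM {n : ℕ} (hn : n ≠ 0) (z : Fin n → ℂ) (f : ℂ → ℝ) :
    ∫ x, f x ∂(countPM hn z : Measure ℂ) = (n : ℝ)⁻¹ * ∑ j, f (z j) := by
  change ∫ x, f x ∂((n : ℝ≥0∞)⁻¹ • ∑ j, Measure.dirac (z j)) = _
  rw [integral_smul_measure, integral_finsetSum_measure fun j _ => integrable_dirac enorm_lt_top]
  simp [integral_dirac]

lemma prod_norm_sub_le_exp_integral_countPM {n : ℕ} (hn : n ≠ 0) (z : Fin n → ℂ) {t : ℂ}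
    {h : ℂ → ℝ} (hz : ∀ j, ‖t - z j‖ ≤ Real.exp (h (z j))) :
    ∏ j, ‖t - z j‖ ≤ Real.exp (n * ∫ x, h x ∂(countPM hn z : Measure ℂ)) := by
  rw [integral_countPM, mul_inv_cancel_left₀ (Nat.cast_ne_zero.2 hn), Real.exp_sum]
  exact Finset.prod_le_prod (fun j _ => norm_nonneg _) fun j _ => hz j

theorem exists_boundedContinuous_majorant_log_norm_sub {μ : Measure ℂ} [IsProbabilityMeasure μ]
    {K : Set ℂ} (hK : Bornology.IsBounded K) (hμK : μ Kᶜ = 0) {t₀ : ℂ} (ht₀ : t₀ ∈ K) {a : ℝ}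
    (ha : ∫ ξ, Real.log ‖t₀ - ξ‖ ∂μ < a) :
    ∃ δ > 0, ∃ h : ℂ →ᵇ ℝ, ∫ ξ, h ξ ∂μ < a ∧
      ∀ t, dist t t₀ < δ → ∀ w ∈ K, ‖t - w‖ ≤ Real.exp (h w) := by
  set M := Metric.diam K
  have hM : ∀ w ∈ K, ‖t₀ - w‖ ≤ M := fun w hw => by
    simpa [dist_eq_norm] using Metric.dist_le_diam_of_mem hK ht₀ hw
  have hM0 : 0 ≤ M := Metric.diam_nonneg
  have hdM : ∀ᵐ ξ ∂μ, ‖t₀ - ξ‖ ≤ M := by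
    filter_upwards [ae_iff.2 hμK] with ξ hξ using hM ξ hξ
  obtain ⟨δ, hδ, hδa⟩ := exists_integral_log_add_min_lt (by fun_prop)
    (fun ξ => norm_nonneg (t₀ - ξ)) hM0 hdM ha
  have hpos : ∀ w, 0 < δ + min ‖t₀ - w‖ M := fun w => by
    linarith [le_min (norm_nonneg (t₀ - w)) hM0]
  have hcont : Continuous fun w => Real.log (δ + min ‖t₀ - w‖ M) :=
    Continuous.log (by fun_prop) fun w => (hpos w).ne'
  have hbound : ∀ w, ‖Real.log (δ + min ‖t₀ - w‖ M)‖ ≤ max (-Real.log δ) (Real.log (δ + M)) := by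
    intro w
    have hlow : Real.log δ ≤ Real.log (δ + min ‖t₀ - w‖ M) :=
      Real.log_le_log hδ (by linarith [le_min (norm_nonneg (t₀ - w)) hM0])
    have hup : Real.log (δ + min ‖t₀ - w‖ M) ≤ Real.log (δ + M) :=
      Real.log_le_log (hpos w) (by linarith [min_le_right ‖t₀ - w‖ M])
    rw [Real.norm_eq_abs, abs_le]
    constructor
    · linarith [le_max_left (-Real.log δ) (Real.log (δ + M))]
    · linarith [le_max_right (-Real.log δ) (Real.log (δ + M))]
  refine ⟨δ, hδ, .ofNormedAddCommGroup _ hcont _ hbound, by simpa using hδa, ?_⟩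
  intro t ht w hw
  rw [BoundedContinuousFunction.coe_ofNormedAddCommGroup, Real.exp_log (hpos w),
    min_eq_left (hM w hw)]
  calc ‖t - w‖ ≤ ‖t - t₀‖ + ‖t₀ - w‖ := norm_sub_le_norm_sub_add_norm_sub t t₀ w
    _ ≤ δ + ‖t₀ - w‖ := by rw [← dist_eq_norm]; linarith

def WeightedProdBound (K : Set ℂ) (R : ℂ → ℝ) (c : ℝ) (ν : ProbabilityMeasure ℂ) (t : ℂ) :
    Prop :=
  t ∈ K → ∀ (n : ℕ) (hn : n ≠ 0) (z : Fin n → ℂ), (∀ j, z j ∈ K) → countPM hn z = ν →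
    Real.exp (-(n : ℝ) * R t) * ∏ j, ‖t - z j‖ ≤ Real.exp (-(n : ℝ) * c)

theorem eventually_weightedProdBound {K : Set ℂ} (hK : Bornology.IsBounded K) {R : ℂ → ℝ}
    (μ : ProbabilityMeasure ℂ) (hμK : (μ : Measure ℂ) Kᶜ = 0) {ρ ε : ℝ} (hε : 0 < ε) {t₀ : ℂ}
    (ht₀ : t₀ ∈ K) (hR : ContinuousWithinAt R K t₀)
    (hpot : R t₀ = (∫ ξ, Real.log ‖t₀ - ξ‖ ∂μ) + ρ) :
    ∀ᶠ p : ProbabilityMeasure ℂ × ℂ in 𝓝 (μ, t₀), WeightedProdBound K R (ρ - ε) p.1 p.2 := by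
  obtain ⟨δ, hδ, h, hhμ, hmaj⟩ := exists_boundedContinuous_majorant_log_norm_sub hK hμK ht₀
    (a := R t₀ - ρ + ε / 2) (by linarith)
  obtain ⟨r, hr, hRr⟩ := Metric.continuousWithinAt_iff.1 hR (ε / 2) (half_pos hε)
  have hopen : IsOpen {ν : ProbabilityMeasure ℂ | ∫ x, h x ∂ν < R t₀ - ρ + ε / 2} :=
    isOpen_lt (ProbabilityMeasure.continuous_integral_boundedContinuousFunction h) continuous_const
  filter_upwards [prod_mem_nhds (hopen.mem_nhds hhμ) (Metric.ball_mem_nhds t₀ (lt_min hδ hr))]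
    with ⟨ν, t⟩ ⟨hν, ht⟩ htK n hn z hzK hzν
  subst hzν
  have hprod := prod_norm_sub_le_exp_integral_countPM hn z fun j =>
    hmaj t (ht.trans_le (min_le_left δ r)) (z j) (hzK j)
  have hRt := hRr htK (ht.trans_le (min_le_right δ r))
  rw [Real.dist_eq, abs_lt] at hRt
  have hν' : ∫ x, h x ∂(countPM hn z : Measure ℂ) - R t + ρ - ε ≤ 0 := by
    linarith [show ∫ x, h x ∂(countPM hn z : Measure ℂ) < R t₀ - ρ + ε / 2 from hν]
  calc Real.exp (-(n : ℝ) * R t) * ∏ j, ‖t - z j‖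
      ≤ Real.exp (-(n : ℝ) * R t) * Real.exp (n * ∫ x, h x ∂(countPM hn z : Measure ℂ)) :=
        mul_le_mul_of_nonneg_left hprod (Real.exp_pos _).le
    _ ≤ Real.exp (-(n : ℝ) * (ρ - ε)) := by
        rw [← Real.exp_add, Real.exp_le_exp]
        linarith [mul_nonpos_of_nonneg_of_nonpos (Nat.cast_nonneg (α := ℝ) n) hν']

theorem stmt2_general (K : Set ℂ) (hKc : IsCompact K)
    (R : ℂ → ℝ) (hR : ContinuousOn R K)
    (μ : Measure ℂ) (hμ : IsEquilibrium K R μ) (ρ : ℝ)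
    (hρ : ∀ t ∈ msupport μ, R t = (∫ ξ, Real.log ‖t - ξ‖ ∂μ) + ρ)
    (ε : ℝ) (hε : 0 < ε) :
    ∃ G ∈ @nhds (ProbabilityMeasure ℂ) _ ⟨μ, hμ.1⟩, ∀ (n : ℕ) (hn : n ≠ 0) (z : Fin n → ℂ),
      (∀ j, z j ∈ K) → countPM hn z ∈ G →
      ∀ t ∈ msupport μ,
        Real.exp (-(n : ℝ) * R t) * ∏ j, ‖t - z j‖
          ≤ Real.exp (-(n : ℝ) * (ρ - ε)) := by
  have hSK : msupport μ ⊆ K := by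
    rw [msupport_eq_support]
    exact Measure.support_subset_of_isClosed hKc.isClosed (mem_ae_iff.2 hμ.2.1)
  have hS : IsCompact (msupport μ) :=
    hKc.of_isClosed_subset (msupport_eq_support μ ▸ Measure.isClosed_support) hSK
  refine ⟨_, hS.eventually_forall_of_forall_eventually fun t₀ ht₀ =>
    eventually_weightedProdBound hKc.isBounded ⟨μ, hμ.1⟩ hμ.2.1 hε (hSK ht₀) (hR t₀ (hSK ht₀))
      (hρ t₀ ht₀), ?_⟩
  intro n hn z hz hG t ht
  exact hG t ht (hSK ht) n hn z hz rfl

theorem stmt2 (K : Set ℂ) (hKc : IsCompact K) (hKreg : RegularSet K)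
    (R : ℂ → ℝ) (hR : ContinuousOn R K)
    (μ : Measure ℂ) (hμ : IsEquilibrium K R μ) (ρ : ℝ)
    (hρ : ∀ t ∈ msupport μ, R t = (∫ ξ, Real.log ‖t - ξ‖ ∂μ) + ρ)
    (ε : ℝ) (hε : 0 < ε) :
    ∃ G ∈ @nhds (ProbabilityMeasure ℂ) _ ⟨μ, hμ.1⟩, ∀ (n : ℕ) (hn : n ≠ 0) (z : Fin n → ℂ),
      (∀ j, z j ∈ K) → countPM hn z ∈ G →
      ∀ t ∈ msupport μ,
        Real.exp (-(n : ℝ) * R t) * ∏ j, ‖t - z j‖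
          ≤ Real.exp (-(n : ℝ) * (ρ - ε)) :=
  stmt2_general K hKc R hR μ hμ ρ hρ ε hε
end
end

section
/- If a measure τ on a compact set K ⊂ ℂ^N satisfies the weighted Bernstein–Markov inequality for weight e^{-R} (in L^1), then for every β > 0 it satisfies an L^β version: for every ε > 0 there is C > 0 such that ‖e^{-nR}p‖_K ≤ C(1+ε)^n (∫_K (e^{-nR}|p|)^β dτ)^{1/β} for all polynomials p of degree ≤ n and all n. -/
open MeasureTheory Complex Set Filter
open scoped Topology ENNReal NNReal Real

noncomputable section

/-!
Let `x₀ ∈ K` maximise `f = e^{-nR}|p|` on `K` and put `S = f x₀`, so that `f ≤ S` on `K` and the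
`L¹` inequality gives `S ≤ C (1+ε)^n ∫_K f dτ`. For `β ≤ 1` the interpolation
`∫_K f ≤ S^{1-β} ∫_K f^β` turns this into `S^β ≤ C (1+ε)^n ∫_K f^β`; running the `L¹` inequality
with `(1+ε)^β` in place of `1+ε` and taking `β`-th roots gives the `L^β` inequality. For `β > 1`,
Hölder's inequality `∫_K f ≤ τ(K)^{1-1/β} (∫_K f^β)^{1/β}` suffices. Testing the `L¹` inequality on
`p = 1` shows `0 < τ(K) < ∞`.
-/

section Interpolation

variable {α : Type*} [MeasurableSpace α] {μ : Measure α} [IsFiniteMeasure μ] {f : α → ℝ} {S β : ℝ}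

lemma integral_le_rpow_mul_integral_rpow (hf0 : ∀ w, 0 ≤ f w) (hfm : AEStronglyMeasurable f μ)
    (hS0 : 0 ≤ S) (hfS : ∀ᵐ w ∂μ, f w ≤ S) (hβ : 0 < β) (hβ1 : β ≤ 1) :
    ∫ w, f w ∂μ ≤ S ^ (1 - β) * ∫ w, f w ^ β ∂μ := by
  have hint : Integrable (fun w => S ^ (1 - β) * f w ^ β) μ := by
    refine memLp_one_iff_integrable.mp <| MemLp.of_bound
      (((Real.continuous_rpow_const hβ.le).comp_aestronglyMeasurable hfm).const_mul _)
      (S ^ (1 - β) * S ^ β) ?_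
    filter_upwards [hfS] with w hw
    rw [Real.norm_of_nonneg (mul_nonneg (Real.rpow_nonneg hS0 _) (Real.rpow_nonneg (hf0 w) _))]
    gcongr
    exact hf0 w
  rw [← integral_const_mul]
  refine integral_mono_of_nonneg (.of_forall hf0) hint ?_
  filter_upwards [hfS] with w hw
  rcases (hf0 w).eq_or_lt with h | h
  · rw [← h, Real.zero_rpow hβ.ne', mul_zero]
  · calc f w = f w ^ (1 - β) * f w ^ β := by rw [← Real.rpow_add h]; norm_num
      _ ≤ S ^ (1 - β) * f w ^ β := by gcongr

lemma rpow_le_mul_integral_rpow (hf0 : ∀ w, 0 ≤ f w) (hfm : AEStronglyMeasurable f μ)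
    (hS0 : 0 ≤ S) (hfS : ∀ᵐ w ∂μ, f w ≤ S) (hβ : 0 < β) (hβ1 : β ≤ 1) {A : ℝ} (hA : 0 ≤ A)
    (hSA : S ≤ A * ∫ w, f w ∂μ) :
    S ^ β ≤ A * ∫ w, f w ^ β ∂μ := by
  have hJ : 0 ≤ ∫ w, f w ^ β ∂μ := integral_nonneg fun w => Real.rpow_nonneg (hf0 w) β
  rcases hS0.eq_or_lt with rfl | hS
  · rw [Real.zero_rpow hβ.ne']
    positivity
  refine le_of_mul_le_mul_right ?_ (Real.rpow_pos_of_pos hS (1 - β))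
  calc S ^ β * S ^ (1 - β) = S := by rw [← Real.rpow_add hS]; norm_num
    _ ≤ A * (S ^ (1 - β) * ∫ w, f w ^ β ∂μ) :=
      hSA.trans <| by gcongr; exact integral_le_rpow_mul_integral_rpow hf0 hfm hS0 hfS hβ hβ1
    _ = A * (∫ w, f w ^ β ∂μ) * S ^ (1 - β) := by ring

lemma integral_le_integral_rpow_rpow_mul_measureReal (hf0 : ∀ w, 0 ≤ f w)
    (hfm : AEStronglyMeasurable f μ) (hfS : ∀ᵐ w ∂μ, f w ≤ S) (hβ1 : 1 < β) :
    ∫ w, f w ∂μ ≤ (∫ w, f w ^ β ∂μ) ^ (1 / β) * μ.real univ ^ (1 - 1 / β) := by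
  have hpq := Real.HolderConjugate.conjExponent hβ1
  have hfLp : MemLp f (ENNReal.ofReal β) μ := by
    refine MemLp.of_bound hfm S ?_
    filter_upwards [hfS] with w hw
    rwa [Real.norm_of_nonneg (hf0 w)]
  have H := integral_mul_le_Lp_mul_Lq_of_nonneg hpq (.of_forall hf0)
    (.of_forall fun _ => zero_le_one) hfLp (memLp_const (1 : ℝ))
  simp only [mul_one, Real.one_rpow, integral_const, smul_eq_mul] at H
  rwa [one_div β.conjExponent, ← hpq.one_sub_inv, ← one_div] at H

end Interpolation

lemma IsCompact.exists_ae_restrict_le_of_continuousOn {α : Type*} [TopologicalSpace α]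
    [MeasurableSpace α] [OpensMeasurableSpace α] [T2Space α] {K : Set α} (hK : IsCompact K)
    (μ : Measure α) {f : α → ℝ} (hf : ContinuousOn f K) {z : α} (hz : z ∈ K) :
    ∃ x₀ ∈ K, f z ≤ f x₀ ∧ ∀ᵐ w ∂μ.restrict K, f w ≤ f x₀ := by
  obtain ⟨x₀, hx₀K, hx₀⟩ := hK.exists_isMaxOn ⟨z, hz⟩ hf
  exact ⟨x₀, hx₀K, hx₀ hz, ae_restrict_of_forall_mem hK.measurableSet fun w hw => hx₀ hw⟩

/-- `F n` stands for the weighted polynomials `e^{-nR}|p|` with `deg p ≤ n`. -/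
def HasBernsteinMarkov {α : Type*} [MeasurableSpace α] (K : Set α) (μ : Measure α)
    (F : ℕ → Set (α → ℝ)) (β : ℝ) : Prop :=
  ∀ ε > 0, ∃ C > 0, ∀ n, ∀ f ∈ F n, ∀ z ∈ K,
    f z ≤ C * (1 + ε) ^ n * (∫ w in K, f w ^ β ∂μ) ^ (1 / β)

namespace HasBernsteinMarkov

variable {α : Type*} [MeasurableSpace α] {K : Set α} {μ : Measure α}
  {F : ℕ → Set (α → ℝ)} {β : ℝ}

lemma measureReal_pos (h : HasBernsteinMarkov K μ F 1) (hF1 : (fun _ => 1) ∈ F 0)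
    (hK : K.Nonempty) : 0 < μ.real K := by
  obtain ⟨C, hC, hBM⟩ := h 1 one_pos
  obtain ⟨z, hz⟩ := hK
  have h1 : 1 ≤ C * μ.real K := by simpa using hBM 0 _ hF1 z hz
  exact pos_of_mul_pos_right (one_pos.trans_le h1) hC.le

variable [TopologicalSpace α] [OpensMeasurableSpace α] [T2Space α]

lemma rpow_of_le_one (hK : IsCompact K) (hFcont : ∀ n, ∀ f ∈ F n, ContinuousOn f K)
    (hF0 : ∀ n, ∀ f ∈ F n, ∀ w, 0 ≤ f w) (h : HasBernsteinMarkov K μ F 1) (hμK : μ K ≠ ∞)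
    (hβ : 0 < β) (hβ1 : β ≤ 1) : HasBernsteinMarkov K μ F β := by
  have : IsFiniteMeasure (μ.restrict K) := isFiniteMeasure_restrict.mpr hμK
  intro ε hε
  have hεβ : 1 < (1 + ε) ^ β := Real.one_lt_rpow (by linarith) hβ
  obtain ⟨C, hC, hBM⟩ := h ((1 + ε) ^ β - 1) (by linarith)
  refine ⟨C ^ (1 / β), by positivity, fun n f hf z hz => ?_⟩
  obtain ⟨x₀, hx₀K, hzx₀, hfx₀⟩ := hK.exists_ae_restrict_le_of_continuousOn μ (hFcont n f hf) hz
  have hJ : 0 ≤ ∫ w in K, f w ^ β ∂μ := integral_nonneg fun w => Real.rpow_nonneg (hF0 n f hf w) β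
  have hS : f x₀ ≤ C * ((1 + ε) ^ n) ^ β * ∫ w in K, f w ∂μ := by
    simpa [Real.rpow_pow_comm (by linarith : (0 : ℝ) ≤ 1 + ε)] using hBM n f hf x₀ hx₀K
  have hSβ := rpow_le_mul_integral_rpow (hF0 n f hf)
    ((hFcont n f hf).aestronglyMeasurable hK.measurableSet) (hF0 n f hf x₀) hfx₀ hβ hβ1
    (by positivity) hS
  calc f z ≤ f x₀ := hzx₀
    _ ≤ (C * ((1 + ε) ^ n) ^ β * ∫ w in K, f w ^ β ∂μ) ^ (1 / β) := by
      rwa [one_div, Real.le_rpow_inv_iff_of_pos (hF0 n f hf x₀) (by positivity) hβ]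
    _ = C ^ (1 / β) * (1 + ε) ^ n * (∫ w in K, f w ^ β ∂μ) ^ (1 / β) := by
      rw [Real.mul_rpow (by positivity) hJ, Real.mul_rpow hC.le (by positivity), one_div,
        Real.rpow_rpow_inv (by positivity) hβ.ne']

lemma rpow_of_one_lt (hK : IsCompact K) (hFcont : ∀ n, ∀ f ∈ F n, ContinuousOn f K)
    (hF0 : ∀ n, ∀ f ∈ F n, ∀ w, 0 ≤ f w) (h : HasBernsteinMarkov K μ F 1) (hμK : 0 < μ.real K)
    (hβ1 : 1 < β) : HasBernsteinMarkov K μ F β := by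
  have : IsFiniteMeasure (μ.restrict K) :=
    isFiniteMeasure_restrict.mpr (ENNReal.toReal_pos_iff.mp hμK).2.ne
  intro ε hε
  obtain ⟨C, hC, hBM⟩ := h ε hε
  refine ⟨C * μ.real K ^ (1 - 1 / β), by positivity, fun n f hf z hz => ?_⟩
  obtain ⟨x₀, hx₀K, hzx₀, hfx₀⟩ := hK.exists_ae_restrict_le_of_continuousOn μ (hFcont n f hf) hz
  have hHolder := integral_le_integral_rpow_rpow_mul_measureReal (hF0 n f hf)
    ((hFcont n f hf).aestronglyMeasurable hK.measurableSet) hfx₀ hβ1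
  rw [measureReal_restrict_apply_univ] at hHolder
  calc f z ≤ f x₀ := hzx₀
    _ ≤ C * (1 + ε) ^ n * ∫ w in K, f w ∂μ := by simpa using hBM n f hf x₀ hx₀K
    _ ≤ C * (1 + ε) ^ n * ((∫ w in K, f w ^ β ∂μ) ^ (1 / β) * μ.real K ^ (1 - 1 / β)) := by
      gcongr
    _ = C * μ.real K ^ (1 - 1 / β) * (1 + ε) ^ n * (∫ w in K, f w ^ β ∂μ) ^ (1 / β) := by ring

lemma rpow (hK : IsCompact K) (hFcont : ∀ n, ∀ f ∈ F n, ContinuousOn f K)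
    (hF0 : ∀ n, ∀ f ∈ F n, ∀ w, 0 ≤ f w) (hF1 : (fun _ => 1) ∈ F 0) (h : HasBernsteinMarkov K μ F 1)
    (hβ : 0 < β) : HasBernsteinMarkov K μ F β := by
  rcases K.eq_empty_or_nonempty with rfl | hKne
  · exact fun _ _ => ⟨1, one_pos, fun _ _ _ _ hz => absurd hz (notMem_empty _)⟩
  have hμK := h.measureReal_pos hF1 hKne
  rcases le_or_gt β 1 with hβ1 | hβ1
  · exact h.rpow_of_le_one hK hFcont hF0 (ENNReal.toReal_pos_iff.mp hμK).2.ne hβ hβ1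
  · exact h.rpow_of_one_lt hK hFcont hF0 hμK hβ1

end HasBernsteinMarkov

theorem stmt4_general (N : ℕ) (K : Set (Fin N → ℂ)) (hK : IsCompact K)
    (R : (Fin N → ℂ) → ℝ) (hR : ContinuousOn R K) (τ : Measure (Fin N → ℂ))
    (hBM : ∀ ε > 0, ∃ C > 0, ∀ (n : ℕ) (p : MvPolynomial (Fin N) ℂ), p.totalDegree ≤ n →
      ∀ z ∈ K, Real.exp (-(n : ℝ) * R z) * ‖MvPolynomial.eval z p‖ ≤
        C * (1 + ε) ^ n *
          ∫ w in K, Real.exp (-(n : ℝ) * R w) * ‖MvPolynomial.eval w p‖ ∂τ)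
    (β : ℝ) (hβ : 0 < β) :
    ∀ ε > 0, ∃ C > 0, ∀ (n : ℕ) (p : MvPolynomial (Fin N) ℂ), p.totalDegree ≤ n →
      ∀ z ∈ K, Real.exp (-(n : ℝ) * R z) * ‖MvPolynomial.eval z p‖ ≤
        C * (1 + ε) ^ n *
          (∫ w in K,
            (Real.exp (-(n : ℝ) * R w) * ‖MvPolynomial.eval w p‖) ^ β ∂τ) ^ (1/β) := by
  let F : ℕ → Set ((Fin N → ℂ) → ℝ) := fun n =>
    {f | ∃ p : MvPolynomial (Fin N) ℂ, p.totalDegree ≤ n ∧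
      f = fun w => Real.exp (-(n : ℝ) * R w) * ‖MvPolynomial.eval w p‖}
  have hFcont : ∀ n, ∀ f ∈ F n, ContinuousOn f K := by
    rintro n _ ⟨p, -, rfl⟩
    exact (Real.continuous_exp.comp_continuousOn (continuousOn_const.mul hR)).mul
      (MvPolynomial.continuous_eval p).norm.continuousOn
  have hF0 : ∀ n, ∀ f ∈ F n, ∀ w, 0 ≤ f w := by
    rintro n _ ⟨p, -, rfl⟩ w
    positivity
  have hF1 : (fun _ => 1) ∈ F 0 := ⟨1, by simp, by simp⟩
  have hBM1 : HasBernsteinMarkov K τ F 1 := by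
    intro ε hε
    obtain ⟨C, hC, hCp⟩ := hBM ε hε
    refine ⟨C, hC, ?_⟩
    rintro n _ ⟨p, hp, rfl⟩ z hz
    simpa using hCp n p hp z hz
  intro ε hε
  obtain ⟨C, hC, hCβ⟩ := hBM1.rpow hK hFcont hF0 hF1 hβ ε hε
  exact ⟨C, hC, fun n p hp => hCβ n _ ⟨p, hp, rfl⟩⟩

theorem stmt4 (N : ℕ) (K : Set (Fin N → ℂ)) (hK : IsCompact K)
    (R : (Fin N → ℂ) → ℝ) (hR : ContinuousOn R K) (τ : Measure (Fin N → ℂ))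
    (hτK : τ Kᶜ = 0) (hsupp : ∀ U : Set (Fin N → ℂ), IsOpen U → (U ∩ K).Nonempty → τ U ≠ 0)
    (hBM : ∀ ε > 0, ∃ C > 0, ∀ (n : ℕ) (p : MvPolynomial (Fin N) ℂ), p.totalDegree ≤ n →
      ∀ z ∈ K, Real.exp (-(n : ℝ) * R z) * ‖MvPolynomial.eval z p‖ ≤
        C * (1 + ε) ^ n *
          ∫ w in K, Real.exp (-(n : ℝ) * R w) * ‖MvPolynomial.eval w p‖ ∂τ)
    (β : ℝ) (hβ : 0 < β) :
    ∀ ε > 0, ∃ C > 0, ∀ (n : ℕ) (p : MvPolynomial (Fin N) ℂ), p.totalDegree ≤ n →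
      ∀ z ∈ K, Real.exp (-(n : ℝ) * R z) * ‖MvPolynomial.eval z p‖ ≤
        C * (1 + ε) ^ n *
          (∫ w in K,
            (Real.exp (-(n : ℝ) * R w) * ‖MvPolynomial.eval w p‖) ^ β ∂τ) ^ (1/β) :=
  stmt4_general N K hK R hR τ hBM β hβ
end
end

section
/- Lebesgue measure on ℝ satisfies the strong Bernstein–Markov inequality on any finite union of disjoint closed intervals K ⊂ ℝ: for every continuous R : K → ℝ and ε > 0 there is C > 0 with sup_{x∈K} e^{-nR(x)}|p(x)| ≤ C(1+ε)^n ∫_K e^{-nR}|p| dx for all polynomials p of degree ≤ n. -/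
open MeasureTheory Complex Set Filter
open scoped Topology ENNReal NNReal Real

noncomputable section

/-!
Up to a factor `e^{nη}`, the weight is constant on short intervals, so it suffices to bound
`|p(x)|` by the integral of `|p|` over an interval `J ⊆ K` of fixed length around `x`, with a
constant polynomial in `n`, which `(1 + ε)^n` absorbs. This is a Nikolskii-type inequality.
On `[-1, 1]`, `θ ↦ p(cos θ)` is a trigonometric polynomial of degree `n`, so its sup `M` is at
most `2n + 1` times the mean of `|p(cos θ)|` over the circle. Away from arcs of length `δ` at
`0` and `π`, the substitution `x = cos θ` bounds that integral by `∫ |p| / sin δ`, while the arcs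
contribute at most `δ M` each, which is absorbed into `M` when `δ ≍ 1/n`.
-/

open intervalIntegral
open scoped Finset Polynomial

def expIntMul (k : ℤ) (θ : ℝ) : ℂ := exp (k * θ * I)

lemma expIntMul_add (k l : ℤ) (θ : ℝ) :
    expIntMul (k + l) θ = expIntMul k θ * expIntMul l θ := by
  simp only [expIntMul, ← Complex.exp_add]; push_cast; ring_nf

lemma norm_expIntMul (k : ℤ) (θ : ℝ) : ‖expIntMul k θ‖ = 1 := by
  simpa [expIntMul] using Complex.norm_exp_ofReal_mul_I (k * θ)

@[fun_prop]
lemma continuous_expIntMul (k : ℤ) : Continuous (expIntMul k) := by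
  unfold expIntMul; fun_prop

lemma ofReal_cos_eq_expIntMul (θ : ℝ) :
    (Real.cos θ : ℂ) = 2⁻¹ * expIntMul 1 θ + 2⁻¹ * expIntMul (-1) θ := by
  simp only [expIntMul, Complex.ofReal_cos, Complex.cos]; push_cast; ring_nf

lemma integral_expIntMul (k : ℤ) :
    ∫ θ in (0)..(2 * π), expIntMul k θ = if k = 0 then ((2 * π : ℝ) : ℂ) else 0 := by
  split_ifs with hk
  · simp [hk, expIntMul]
  · have hkI : (k : ℂ) * I ≠ 0 := mul_ne_zero (by exact_mod_cast hk) I_ne_zero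
    have hperiod : exp ((k : ℂ) * I * (2 * π)) = 1 := by
      rw [← Complex.exp_int_mul_two_pi_mul_I k]; ring_nf
    simp only [expIntMul, mul_right_comm _ _ I, integral_exp_mul_complex hkI]
    push_cast
    rw [hperiod]
    simp

lemma integral_sum_mul_expIntMul_neg (s : Finset ℤ) (c : ℤ → ℂ) {j : ℤ} (hj : j ∈ s) :
    ∫ θ in (0)..(2 * π), (∑ k ∈ s, c k * expIntMul k θ) * expIntMul (-j) θ =
      c j * ((2 * π : ℝ) : ℂ) := by
  have hterm (k : ℤ) (θ : ℝ) :
      c k * expIntMul k θ * expIntMul (-j) θ = c k * expIntMul (k - j) θ := by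
    rw [sub_eq_add_neg, expIntMul_add, mul_assoc]
  simp_rw [Finset.sum_mul, hterm]
  rw [integral_finsetSum fun k _ => (by fun_prop : Continuous _).intervalIntegrable _ _]
  simp_rw [intervalIntegral.integral_const_mul, integral_expIntMul, sub_eq_zero, mul_ite, mul_zero]
  rw [Finset.sum_ite_eq' s j, if_pos hj]

lemma norm_coeff_le_integral (s : Finset ℤ) (c : ℤ → ℂ) {j : ℤ} (hj : j ∈ s) :
    ‖c j‖ ≤ (2 * π)⁻¹ * ∫ θ in (0)..(2 * π), ‖∑ k ∈ s, c k * expIntMul k θ‖ := by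
  have h2π : (0 : ℝ) < 2 * π := by positivity
  rw [le_inv_mul_iff₀ h2π]
  calc 2 * π * ‖c j‖
        = ‖∫ θ in (0)..(2 * π), (∑ k ∈ s, c k * expIntMul k θ) * expIntMul (-j) θ‖ := by
        rw [integral_sum_mul_expIntMul_neg s c hj, norm_mul, Complex.norm_real,
          Real.norm_of_nonneg h2π.le, mul_comm]
    _ ≤ ∫ θ in (0)..(2 * π), ‖(∑ k ∈ s, c k * expIntMul k θ) * expIntMul (-j) θ‖ :=
        norm_integral_le_integral_norm h2π.le
    _ = ∫ θ in (0)..(2 * π), ‖∑ k ∈ s, c k * expIntMul k θ‖ := by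
        simp_rw [norm_mul, norm_expIntMul, mul_one]

lemma norm_sum_le_card_mul_integral (s : Finset ℤ) (c : ℤ → ℂ) (θ : ℝ) :
    ‖∑ k ∈ s, c k * expIntMul k θ‖ ≤
      #s * ((2 * π)⁻¹ * ∫ θ in (0)..(2 * π), ‖∑ k ∈ s, c k * expIntMul k θ‖) := by
  calc ‖∑ k ∈ s, c k * expIntMul k θ‖ ≤ ∑ k ∈ s, ‖c k‖ := by
        refine (norm_sum_le _ _).trans_eq (Finset.sum_congr rfl fun k _ => ?_)
        rw [norm_mul, norm_expIntMul, mul_one]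
    _ ≤ _ := by
        rw [← nsmul_eq_mul]
        exact Finset.sum_le_card_nsmul _ _ _ fun k hk => norm_coeff_le_integral s c hk

def trigPolyDegLE (n : ℕ) : Submodule ℂ (ℝ → ℂ) :=
  Submodule.span ℂ (expIntMul '' ↑(Finset.Icc (-n : ℤ) n))

lemma expIntMul_mem_trigPolyDegLE {n : ℕ} {k : ℤ} (hk : -n ≤ k ∧ k ≤ n) :
    expIntMul k ∈ trigPolyDegLE n :=
  Submodule.subset_span ⟨k, Finset.mem_Icc.2 hk, rfl⟩

lemma trigPolyDegLE_mono : Monotone trigPolyDegLE := fun m n hmn =>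
  Submodule.span_mono <| Set.image_mono <| Finset.coe_subset.2 <|
    Finset.Icc_subset_Icc (by omega) (by omega)

lemma norm_le_of_mem_trigPolyDegLE {n : ℕ} {f : ℝ → ℂ} (hf : f ∈ trigPolyDegLE n) (θ : ℝ) :
    ‖f θ‖ ≤ (2 * n + 1) * ((2 * π)⁻¹ * ∫ θ in (0)..(2 * π), ‖f θ‖) := by
  obtain ⟨c, rfl⟩ := (Submodule.mem_span_image_finset_iff_exists_fun' ℂ).1 hf
  have hcard : (#(Finset.Icc (-n : ℤ) n) : ℝ) = 2 * n + 1 := by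
    rw [Int.card_Icc]; norm_cast; omega
  simp only [Finset.sum_apply, Pi.smul_apply, smul_eq_mul]
  exact hcard ▸ norm_sum_le_card_mul_integral _ c θ

lemma ofReal_cos_mul_mem_trigPolyDegLE {n : ℕ} {f : ℝ → ℂ} (hf : f ∈ trigPolyDegLE n) :
    (fun θ => (Real.cos θ : ℂ)) * f ∈ trigPolyDegLE (n + 1) := by
  induction hf using Submodule.span_induction with
  | mem g hg =>
    obtain ⟨k, hk, rfl⟩ := hg
    have hk := Finset.mem_Icc.1 hk
    have hup := expIntMul_mem_trigPolyDegLE (n := n + 1) (k := 1 + k) (by push_cast; omega)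
    have hdown := expIntMul_mem_trigPolyDegLE (n := n + 1) (k := -1 + k) (by push_cast; omega)
    convert Submodule.add_mem _ (Submodule.smul_mem _ 2⁻¹ hup)
      (Submodule.smul_mem _ 2⁻¹ hdown) using 1
    ext θ
    simp only [Pi.mul_apply, ofReal_cos_eq_expIntMul, expIntMul_add, Pi.add_apply,
      Pi.smul_apply, smul_eq_mul]
    ring
  | zero => simpa only [mul_zero] using (trigPolyDegLE (n + 1)).zero_mem
  | add f g _ _ hf hg => simpa only [mul_add] using Submodule.add_mem _ hf hg
  | smul a f _ hf => simpa only [mul_smul_comm] using Submodule.smul_mem _ a hf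

lemma ofReal_cos_pow_mem_trigPolyDegLE (j : ℕ) :
    (fun θ => (Real.cos θ : ℂ)) ^ j ∈ trigPolyDegLE j := by
  induction j with
  | zero =>
    convert expIntMul_mem_trigPolyDegLE (n := 0) (k := 0) (by simp) using 1
    ext; simp [expIntMul]
  | succ j ih => simpa only [pow_succ'] using ofReal_cos_mul_mem_trigPolyDegLE ih

lemma eval_ofReal_cos_mem_trigPolyDegLE {n : ℕ} {p : ℂ[X]} (hp : p.natDegree ≤ n) :
    (fun θ => p.eval (Real.cos θ : ℂ)) ∈ trigPolyDegLE n := by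
  have hsum : (fun θ => p.eval (Real.cos θ : ℂ)) =
      ∑ j ∈ Finset.range (n + 1), p.coeff j • (fun θ => (Real.cos θ : ℂ)) ^ j := by
    ext θ
    simp [Polynomial.eval_eq_sum_range' (Nat.lt_succ_of_le hp)]
  rw [hsum]
  exact Submodule.sum_mem _ fun j hj => Submodule.smul_mem _ _ <|
    trigPolyDegLE_mono (Nat.lt_succ_iff.1 (Finset.mem_range.1 hj))
      (ofReal_cos_pow_mem_trigPolyDegLE j)

lemma sin_le_sin_of_mem_Icc {δ θ : ℝ} (hδ : 0 ≤ δ) (hθ : θ ∈ Icc δ (π - δ)) :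
    Real.sin δ ≤ Real.sin θ := by
  have hπ := Real.pi_pos
  rcases le_total θ (π / 2) with h | h
  · exact Real.sin_le_sin_of_le_of_le_pi_div_two (by linarith) h hθ.1
  · rw [← Real.sin_pi_sub θ]
    exact Real.sin_le_sin_of_le_of_le_pi_div_two (by linarith) (by linarith) (by linarith [hθ.2])

lemma integral_comp_cos_mul_sin {g : ℝ → ℝ} (hg : Continuous g) (u v : ℝ) :
    ∫ θ in u..v, g (Real.cos θ) * Real.sin θ = ∫ x in Real.cos v..Real.cos u, g x := by
  have h := integral_comp_mul_deriv (fun θ _ => Real.hasDerivAt_cos θ)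
    Real.continuous_sin.neg.continuousOn hg (a := u) (b := v)
  simp only [Function.comp_apply, mul_neg, intervalIntegral.integral_neg] at h
  rw [integral_symm (Real.cos u), ← h, neg_neg]

section CosSubstitution

variable {g : ℝ → ℝ} {M δ : ℝ}

lemma integral_Icc_comp_cos_le (hg : Continuous g) (hg0 : ∀ x, 0 ≤ g x) (hδ0 : 0 < δ)
    (hδ : δ ≤ π / 2) :
    ∫ θ in δ..π - δ, g (Real.cos θ) ≤ (Real.sin δ)⁻¹ * ∫ x in (-1)..1, g x := by
  have hsin : 0 < Real.sin δ := Real.sin_pos_of_pos_of_lt_pi hδ0 (by linarith [Real.pi_pos])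
  have hcos : 0 ≤ Real.cos δ := Real.cos_nonneg_of_mem_Icc ⟨by linarith, hδ⟩
  calc ∫ θ in δ..π - δ, g (Real.cos θ)
      ≤ ∫ θ in δ..π - δ, (Real.sin δ)⁻¹ * (g (Real.cos θ) * Real.sin θ) := by
        refine integral_mono_on (by linarith) ((hg.comp Real.continuous_cos).intervalIntegrable _ _)
          ((by fun_prop : Continuous _).intervalIntegrable _ _) fun θ hθ => ?_
        rw [inv_mul_eq_div, le_div_iff₀ hsin]
        exact mul_le_mul_of_nonneg_left (sin_le_sin_of_mem_Icc hδ0.le hθ) (hg0 _)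
    _ = (Real.sin δ)⁻¹ * ∫ x in -Real.cos δ..Real.cos δ, g x := by
        rw [intervalIntegral.integral_const_mul, integral_comp_cos_mul_sin hg, Real.cos_pi_sub]
    _ ≤ (Real.sin δ)⁻¹ * ∫ x in (-1)..1, g x := by
        gcongr
        exact integral_mono_interval (by linarith [Real.cos_le_one δ]) (by linarith)
          (Real.cos_le_one δ) (Eventually.of_forall hg0) (hg.intervalIntegrable _ _)

lemma integral_comp_cos_le (hg : Continuous g) (hg0 : ∀ x, 0 ≤ g x)
    (hM : ∀ x ∈ Icc (-1) 1, g x ≤ M) (hδ0 : 0 < δ) (hδ : δ ≤ π / 2) :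
    ∫ θ in (0)..π, g (Real.cos θ) ≤ 2 * δ * M + (Real.sin δ)⁻¹ * ∫ x in (-1)..1, g x := by
  have hint (u v : ℝ) : IntervalIntegrable (fun θ => g (Real.cos θ)) volume u v :=
    (hg.comp Real.continuous_cos).intervalIntegrable u v
  have hedge {u v : ℝ} (huv : u ≤ v) : ∫ θ in u..v, g (Real.cos θ) ≤ (v - u) * M := by
    simpa using integral_mono_on huv (hint u v) intervalIntegrable_const
      fun θ _ => hM _ ⟨Real.neg_one_le_cos θ, Real.cos_le_one θ⟩
  rw [← integral_add_adjacent_intervals (hint 0 δ) (hint δ π),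
    ← integral_add_adjacent_intervals (hint δ (π - δ)) (hint (π - δ) π)]
  linarith [hedge hδ0.le, hedge (u := π - δ) (v := π) (by linarith),
    integral_Icc_comp_cos_le hg hg0 hδ0 hδ]

lemma integral_zero_two_pi_comp_cos (hg : Continuous g) :
    ∫ θ in (0)..(2 * π), g (Real.cos θ) = 2 * ∫ θ in (0)..π, g (Real.cos θ) := by
  have hint (u v : ℝ) : IntervalIntegrable (fun θ => g (Real.cos θ)) volume u v :=
    (hg.comp Real.continuous_cos).intervalIntegrable u v
  have hreflect : ∫ θ in π..(2 * π), g (Real.cos θ) = ∫ θ in (0)..π, g (Real.cos θ) := by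
    have h := integral_comp_sub_left (fun θ => g (Real.cos θ)) (2 * π) (a := 0) (b := π)
    simp only [Real.cos_two_pi_sub, sub_zero, show 2 * π - π = π by ring] at h
    exact h.symm
  rw [← integral_add_adjacent_intervals (hint 0 π) (hint π (2 * π)), hreflect, two_mul]

end CosSubstitution

theorem norm_eval_le_integral_neg_one_one {n : ℕ} {p : ℂ[X]} (hp : p.natDegree ≤ n) {x : ℝ}
    (hx : x ∈ Icc (-1) 1) :
    ‖p.eval (x : ℂ)‖ ≤ 8 * (n + 1) ^ 2 * ∫ y in (-1)..1, ‖p.eval (y : ℂ)‖ := by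
  set g := fun t : ℝ => ‖p.eval (t : ℂ)‖
  have hg : Continuous g := by fun_prop
  obtain ⟨x₀, hx₀, hmax⟩ := (isCompact_Icc (a := (-1 : ℝ)) (b := 1)).exists_isMaxOn
    (nonempty_Icc.2 (by norm_num)) hg.continuousOn
  set M := g x₀
  set N := ∫ y in (-1)..1, g y
  set B : ℝ := 2 * n + 1
  have hB : 1 ≤ B := by simp [B]
  -- the two edge arcs then contribute exactly `M / 2`
  set δ := π / (4 * B) with hδdef
  have hδ0 : 0 < δ := by positivity
  have hδ : δ ≤ π / 2 := div_le_div_of_nonneg_left Real.pi_pos.le (by norm_num) (by linarith)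
  have hsin : (Real.sin δ)⁻¹ ≤ 2 * B := by
    have h := Real.mul_le_sin hδ0.le hδ
    have hδB : 2 / π * δ = (2 * B)⁻¹ := by rw [hδdef]; field_simp; ring
    rw [inv_le_comm₀ (hδB ▸ h |>.trans_lt' (by positivity)) (by positivity)]
    linarith
  have htrig : M ≤ B * ((2 * π)⁻¹ * (2 * ∫ θ in (0)..π, g (Real.cos θ))) := by
    have h := norm_le_of_mem_trigPolyDegLE (eval_ofReal_cos_mem_trigPolyDegLE hp) (Real.arccos x₀)
    rwa [Real.cos_arccos hx₀.1 hx₀.2, integral_zero_two_pi_comp_cos hg] at h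
  have hcos := integral_comp_cos_le hg (fun t => norm_nonneg _) (fun t ht => hmax ht) hδ0 hδ
  have hN : 0 ≤ N := integral_nonneg (by norm_num) fun t _ => norm_nonneg _
  have hhalf : M ≤ M / 2 + 2 * B ^ 2 / π * N := by
    calc M ≤ B * ((2 * π)⁻¹ * (2 * (2 * δ * M + (Real.sin δ)⁻¹ * N))) := by
          refine htrig.trans ?_; gcongr
      _ = M / 2 + B / π * (Real.sin δ)⁻¹ * N := by rw [hδdef]; field_simp; ring
      _ ≤ M / 2 + B / π * (2 * B) * N := by gcongr
      _ = M / 2 + 2 * B ^ 2 / π * N := by ring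
  calc ‖p.eval (x : ℂ)‖ ≤ M := hmax hx
    _ ≤ 2 * (2 * B ^ 2 / π * N) := by linarith
    _ = 4 * B ^ 2 / π * N := by ring
    _ ≤ 8 * (n + 1) ^ 2 * N := by
        gcongr
        rw [div_le_iff₀ Real.pi_pos]
        nlinarith [Real.pi_gt_three]

theorem norm_eval_le_integral {n : ℕ} {p : ℂ[X]} (hp : p.natDegree ≤ n) {c d x : ℝ}
    (hcd : c < d) (hx : x ∈ Icc c d) :
    ‖p.eval (x : ℂ)‖ ≤ 16 * (n + 1) ^ 2 / (d - c) * ∫ y in c..d, ‖p.eval (y : ℂ)‖ := by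
  set h := (d - c) / 2
  set m := (c + d) / 2
  have hh : 0 < h := by simp only [h]; linarith
  set q := p.comp (Polynomial.C (h : ℂ) * Polynomial.X + Polynomial.C (m : ℂ))
  have hq : q.natDegree ≤ n :=
    Polynomial.natDegree_comp_le.trans <|
      (Nat.mul_le_mul hp Polynomial.natDegree_linear_le).trans_eq (mul_one n)
  have heval (t : ℝ) : q.eval (t : ℂ) = p.eval ((h * t + m : ℝ) : ℂ) := by
    simp [q]
  have hint : ∫ t in (-1)..1, ‖q.eval (t : ℂ)‖ = h⁻¹ * ∫ y in c..d, ‖p.eval (y : ℂ)‖ := by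
    simp_rw [heval]
    rw [integral_comp_mul_add (fun y => ‖p.eval (y : ℂ)‖) hh.ne', smul_eq_mul]
    congr 2 <;> simp only [h, m] <;> ring
  have hy : (x - m) / h ∈ Icc (-1) 1 := by
    constructor
    · rw [le_div_iff₀ hh]; simp only [h, m]; linarith [hx.1]
    · rw [div_le_iff₀ hh]; simp only [h, m]; linarith [hx.2]
  have hxy : h * ((x - m) / h) + m = x := by field_simp; ring
  calc ‖p.eval (x : ℂ)‖ = ‖q.eval (((x - m) / h : ℝ) : ℂ)‖ := by rw [heval, hxy]
    _ ≤ 8 * (n + 1) ^ 2 * ∫ t in (-1)..1, ‖q.eval (t : ℂ)‖ :=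
        norm_eval_le_integral_neg_one_one hq hy
    _ = 16 * (n + 1) ^ 2 / (d - c) * ∫ y in c..d, ‖p.eval (y : ℂ)‖ := by
        rw [hint]; simp only [h]; field_simp; ring

lemma exp_mul_norm_eval_le_integral {n : ℕ} {p : ℂ[X]} (hp : p.natDegree ≤ n) {R : ℝ → ℝ}
    {c d x η : ℝ} (hcd : c < d) (hx : x ∈ Icc c d) (hR : ContinuousOn R (Icc c d))
    (hRη : ∀ y ∈ Icc c d, R y ≤ R x + η) :
    Real.exp (-n * R x) * ‖p.eval (x : ℂ)‖ ≤
      16 * (n + 1) ^ 2 / (d - c) * Real.exp (n * η) *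
        ∫ y in Icc c d, Real.exp (-n * R y) * ‖p.eval (y : ℂ)‖ := by
  have hweight : ∀ y ∈ Icc c d, Real.exp (-n * R x) ≤ Real.exp (n * η) * Real.exp (-n * R y) :=
    fun y hy => by
      rw [← Real.exp_add, Real.exp_le_exp]
      nlinarith [hRη y hy, (Nat.cast_nonneg n : (0 : ℝ) ≤ n)]
  rw [integral_Icc_eq_integral_Ioc, ← integral_of_le hcd.le, mul_assoc _ (Real.exp _),
    ← intervalIntegral.integral_const_mul]
  calc Real.exp (-n * R x) * ‖p.eval (x : ℂ)‖
      ≤ Real.exp (-n * R x) * (16 * (n + 1) ^ 2 / (d - c) * ∫ y in c..d, ‖p.eval (y : ℂ)‖) := by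
        gcongr; exact norm_eval_le_integral hp hcd hx
    _ = 16 * (n + 1) ^ 2 / (d - c) * ∫ y in c..d, Real.exp (-n * R x) * ‖p.eval (y : ℂ)‖ := by
        rw [intervalIntegral.integral_const_mul]; ring
    _ ≤ _ := by
        gcongr
        refine integral_mono_on hcd.le ((by fun_prop : Continuous _).intervalIntegrable _ _) ?_
          fun y hy => ?_
        · exact (ContinuousOn.intervalIntegrable (by rw [uIcc_of_le hcd.le]; fun_prop))
        · rw [← mul_assoc]; gcongr; exact hweight y hy

lemma exists_Icc_subset_Icc {a b x L : ℝ} (hL0 : 0 ≤ L) (hL : L ≤ b - a) (hx : x ∈ Icc a b) :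
    ∃ c, x ∈ Icc c (c + L) ∧ Icc c (c + L) ⊆ Icc a b := by
  refine ⟨min x (b - L), ⟨min_le_left _ _, ?_⟩, Icc_subset_Icc ?_ ?_⟩
  · rcases le_total x (b - L) with h | h
    · simp only [min_eq_left h]; linarith
    · simp only [min_eq_right h]; linarith [hx.2]
  · exact le_min hx.1 (by linarith)
  · linarith [min_le_right x (b - L)]

lemma exists_pos_lt_forall_le_sub {ι : Type*} [Fintype ι] {a b : ι → ℝ} (hab : ∀ i, a i < b i)
    {δ : ℝ} (hδ : 0 < δ) : ∃ L > 0, L < δ ∧ ∀ i, L ≤ b i - a i := by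
  classical
  set s := insert (δ / 2) (Finset.univ.image fun i => b i - a i)
  have hs : s.Nonempty := Finset.insert_nonempty _ _
  refine ⟨s.min' hs, ?_, ?_, fun i => s.min'_le _ ?_⟩
  · show 0 < s.min' hs
    rw [Finset.lt_min'_iff]
    intro y hy
    rcases Finset.mem_insert.1 hy with rfl | hy
    · positivity
    · obtain ⟨i, -, rfl⟩ := Finset.mem_image.1 hy
      exact sub_pos.2 (hab i)
  · exact (s.min'_le _ (Finset.mem_insert_self _ _)).trans_lt (half_lt_self hδ)
  · exact Finset.mem_insert_of_mem (Finset.mem_image_of_mem _ (Finset.mem_univ i))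

lemma exists_pow_le_mul_pow (k : ℕ) {r : ℝ} (hr : 1 < r) :
    ∃ A > 0, ∀ n : ℕ, ((n : ℝ) + 1) ^ k ≤ A * r ^ n := by
  have hlim : Tendsto (fun n : ℕ => ((n : ℝ) + 1) ^ k / r ^ (n + 1)) atTop (𝓝 0) := by
    have h := (tendsto_pow_const_div_const_pow_of_one_lt k hr).comp (tendsto_add_atTop_nat 1)
    simpa [Function.comp_def] using h
  obtain ⟨B, hB⟩ := hlim.bddAbove_range
  have hbound (n : ℕ) : ((n : ℝ) + 1) ^ k ≤ B * r * r ^ n := by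
    have h := hB ⟨n, rfl⟩
    rw [div_le_iff₀ (by positivity), pow_succ] at h
    linarith
  have h0 := hbound 0
  simp only [CharP.cast_eq_zero, zero_add, one_pow, pow_zero, mul_one] at h0
  exact ⟨B * r, by linarith, hbound⟩

lemma exists_pow_mul_exp_le_mul_pow (k : ℕ) {ε : ℝ} (hε : 0 < ε) :
    ∃ η > 0, ∃ A > 0, ∀ n : ℕ, ((n : ℝ) + 1) ^ k * Real.exp (n * η) ≤ A * (1 + ε) ^ n := by
  set η := Real.log (1 + ε) / 2
  have hη : 0 < η := by have := Real.log_pos (by linarith : 1 < 1 + ε); positivity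
  obtain ⟨A, hA, hpow⟩ := exists_pow_le_mul_pow k (Real.one_lt_exp_iff.2 hη)
  refine ⟨η, hη, A, hA, fun n => ?_⟩
  have hexp : Real.exp (n * η) ^ 2 = (1 + ε) ^ n := by
    rw [← Real.exp_nat_mul, show ((2 : ℕ) : ℝ) * (n * η) = n * Real.log (1 + ε) by
      simp only [η]; push_cast; ring, Real.exp_nat_mul, Real.exp_log (by linarith)]
  calc ((n : ℝ) + 1) ^ k * Real.exp (n * η) ≤ A * Real.exp (n * η) * Real.exp (n * η) := by
        rw [Real.exp_nat_mul]; gcongr; exact hpow n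
    _ = A * (1 + ε) ^ n := by rw [← hexp]; ring

theorem stmt8_general (K : Set ℝ) (m : ℕ) (a b : Fin m → ℝ) (hab : ∀ i, a i < b i)
    (hK : K = ⋃ i, Set.Icc (a i) (b i)) :
    ∀ R : ℝ → ℝ, ContinuousOn R K →
    ∀ ε > 0, ∃ C > 0, ∀ (n : ℕ) (p : Polynomial ℂ), p.natDegree ≤ n →
      ∀ x ∈ K, Real.exp (-(n : ℝ) * R x) * ‖p.eval (x : ℂ)‖ ≤
        C * (1 + ε) ^ n *
          ∫ y in K, Real.exp (-(n : ℝ) * R y) * ‖p.eval (y : ℂ)‖ := by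
  intro R hR ε hε
  have hKc : IsCompact K := hK ▸ isCompact_iUnion fun i => isCompact_Icc
  obtain ⟨η, hη, A, hA, hgrowth⟩ := exists_pow_mul_exp_le_mul_pow 2 hε
  obtain ⟨δ, hδ, hRδ⟩ :=
    Metric.uniformContinuousOn_iff.1 (hKc.uniformContinuousOn_of_continuous hR) η hη
  obtain ⟨L, hL, hLδ, hLab⟩ := exists_pos_lt_forall_le_sub hab hδ
  refine ⟨16 * A / L, by positivity, fun n p hp x hx => ?_⟩
  obtain ⟨i, hxi⟩ := mem_iUnion.1 (hK ▸ hx)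
  obtain ⟨c, hxc, hci⟩ := exists_Icc_subset_Icc hL.le (hLab i) hxi
  have hcK : Icc c (c + L) ⊆ K := hK ▸ hci.trans (subset_iUnion (fun i => Icc (a i) (b i)) i)
  have hRη (y : ℝ) (hy : y ∈ Icc c (c + L)) : R y ≤ R x + η := by
    have hxy : dist x y < δ := by
      rw [Real.dist_eq, abs_lt]; constructor <;> linarith [hxc.1, hxc.2, hy.1, hy.2]
    linarith [(abs_lt.1 (Real.dist_eq _ _ ▸ hRδ x hx y (hcK hy) hxy)).1]
  have hint : IntegrableOn (fun y => Real.exp (-n * R y) * ‖p.eval (y : ℂ)‖) K :=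
    ContinuousOn.integrableOn_compact hKc (by fun_prop)
  calc Real.exp (-(n : ℝ) * R x) * ‖p.eval (x : ℂ)‖
      ≤ 16 / L * ((n + 1) ^ 2 * Real.exp (n * η)) *
          ∫ y in Icc c (c + L), Real.exp (-n * R y) * ‖p.eval (y : ℂ)‖ := by
        refine (exp_mul_norm_eval_le_integral hp (by linarith) hxc (hR.mono hcK) hRη).trans_eq ?_
        ring
    _ ≤ 16 / L * (A * (1 + ε) ^ n) * ∫ y in K, Real.exp (-n * R y) * ‖p.eval (y : ℂ)‖ := by
        refine mul_le_mul (mul_le_mul_of_nonneg_left (hgrowth n) (by positivity)) ?_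
          (setIntegral_nonneg measurableSet_Icc fun y _ => by positivity) (by positivity)
        exact setIntegral_mono_set hint (Eventually.of_forall fun y => by positivity)
          hcK.eventuallyLE
    _ = 16 * A / L * (1 + ε) ^ n * ∫ y in K, Real.exp (-n * R y) * ‖p.eval (y : ℂ)‖ := by ring

theorem stmt8 (K : Set ℝ) (m : ℕ) (a b : Fin m → ℝ) (hab : ∀ i, a i < b i)
    (hdisj : Pairwise fun i j => Disjoint (Set.Icc (a i) (b i)) (Set.Icc (a j) (b j)))
    (hK : K = ⋃ i, Set.Icc (a i) (b i)) :
    ∀ R : ℝ → ℝ, ContinuousOn R K →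
    ∀ ε > 0, ∃ C > 0, ∀ (n : ℕ) (p : Polynomial ℂ), p.natDegree ≤ n →
      ∀ x ∈ K, Real.exp (-(n : ℝ) * R x) * ‖p.eval (x : ℂ)‖ ≤
        C * (1 + ε) ^ n *
          ∫ y in K, Real.exp (-(n : ℝ) * R y) * ‖p.eval (y : ℂ)‖ :=
  stmt8_general K m a b hab hK
end
end
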